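/- (Unicity implies purity.) If ρ is a dark state and it is the unique one — i.e. every density matrix ρ' with L(ρ') = 0 and ρ' = Pρ'P equals ρ — then ρ is a pure state: ρ·ρ = ρ (equivalently, ρ has rank one). -/

import Mathlib

open Matrix Complex BigOperators ComplexOrder

/-- Projection onto the ground-state indices. -/
noncomputable def Pg (Ng Ne : ℕ) : Matrix (Fin Ng ⊕ Fin Ne) (Fin Ng ⊕ Fin Ne) ℂ :=
  Matrix.diagonal (Sum.elim (fun _ => 1) (fun _ => 0))

/-- Projection onto the excited-state indices. -/
noncomputable def Qe (Ng Ne : ℕ) : Matrix (Fin Ng ⊕ Fin Ne) (Fin Ng ⊕ Fin Ne) ℂ :=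
  1 - Pg Ng Ne

/-- Jump operator |g_i⟩⟨e_j|. -/
noncomputable def jump (Ng Ne : ℕ) (i : Fin Ng) (j : Fin Ne) :
    Matrix (Fin Ng ⊕ Fin Ne) (Fin Ng ⊕ Fin Ne) ℂ :=
  Matrix.single (Sum.inl i) (Sum.inr j) 1

/-- Decay operator Γ = Σ γ_{ij} σ_{ij}ᴴ σ_{ij}. -/
noncomputable def Gam (Ng Ne : ℕ) (γ : Fin Ng → Fin Ne → ℝ) :
    Matrix (Fin Ng ⊕ Fin Ne) (Fin Ng ⊕ Fin Ne) ℂ :=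
  ∑ i, ∑ j, (γ i j : ℂ) • ((jump Ng Ne i j)ᴴ * jump Ng Ne i j)

/-- The Lindblad generator. -/
noncomputable def Lindblad (Ng Ne : ℕ) (H : Matrix (Fin Ng ⊕ Fin Ne) (Fin Ng ⊕ Fin Ne) ℂ)
    (γ : Fin Ng → Fin Ne → ℝ) (ρ : Matrix (Fin Ng ⊕ Fin Ne) (Fin Ng ⊕ Fin Ne) ℂ) :
    Matrix (Fin Ng ⊕ Fin Ne) (Fin Ng ⊕ Fin Ne) ℂ :=
  (-Complex.I) • (H * ρ - ρ * H) +
    ∑ i, ∑ j, (γ i j : ℂ) •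
      (jump Ng Ne i j * ρ * (jump Ng Ne i j)ᴴ -
        (1 / 2 : ℂ) • ((jump Ng Ne i j)ᴴ * jump Ng Ne i j * ρ +
          ρ * ((jump Ng Ne i j)ᴴ * jump Ng Ne i j)))

/-- A dark state: a density matrix annihilated by the Lindbladian and supported on the
ground-state subspace. -/
def IsDarkState (Ng Ne : ℕ) (H : Matrix (Fin Ng ⊕ Fin Ne) (Fin Ng ⊕ Fin Ne) ℂ)
    (γ : Fin Ng → Fin Ne → ℝ) (ρ : Matrix (Fin Ng ⊕ Fin Ne) (Fin Ng ⊕ Fin Ne) ℂ) : Prop :=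
  ρ.PosSemidef ∧ ρ.trace = 1 ∧ Lindblad Ng Ne H γ ρ = 0 ∧ ρ = Pg Ng Ne * ρ * Pg Ng Ne

/-!
Since every jump operator annihilates the ground space, the dissipator vanishes on states
supported there, so the dark states are exactly the ground-supported density matrices that
commute with `H`. The range of a dark state `ρ` is then an `H`-invariant subspace of the ground
space, hence contains an eigenvector `v` of `H`. The orthogonal projection onto `v` is again a
dark state, so by uniqueness it is `ρ`.
-/

section RankOneProj

variable {𝕜 : Type*} [RCLike 𝕜] {n : Type*} [Fintype n]

theorem Matrix.IsHermitian.exists_mulVec_eigenvector_of_commute [DecidableEq n]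
    {A B : Matrix n n 𝕜} (hA : A.IsHermitian) (hAB : Commute A B) (hB : B ≠ 0) :
    ∃ (w : n → 𝕜) (μ : ℝ), B *ᵥ w ≠ 0 ∧ A *ᵥ (B *ᵥ w) = (μ : 𝕜) • (B *ᵥ w) := by
  obtain ⟨j, hj⟩ : ∃ j, B *ᵥ ⇑(hA.eigenvectorBasis j) ≠ 0 := by
    by_contra! h
    refine hB (toEuclideanLin.injective (hA.eigenvectorBasis.toBasis.ext fun j => ?_))
    simp [toLpLin_apply, h j]
  refine ⟨_, hA.eigenvalues j, hj, ?_⟩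
  rw [mulVec_mulVec, hAB.eq, ← mulVec_mulVec, hA.mulVec_eigenvectorBasis, mulVec_smul,
    RCLike.real_smul_eq_coe_smul (K := 𝕜)]

noncomputable def rankOneProj (v : n → 𝕜) : Matrix n n 𝕜 :=
  (star v ⬝ᵥ v)⁻¹ • vecMulVec v (star v)

theorem rankOneProj_mul_self (v : n → 𝕜) : rankOneProj v * rankOneProj v = rankOneProj v := by
  rcases eq_or_ne v 0 with rfl | hv
  · simp [rankOneProj]
  have : star v ⬝ᵥ v ≠ 0 := dotProduct_star_self_eq_zero.not.2 hv
  simp only [rankOneProj, smul_mul_smul_comm, vecMulVec_mul_vecMulVec, vecMulVec_smul, smul_smul]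
  field_simp

theorem posSemidef_rankOneProj (v : n → 𝕜) : (rankOneProj v).PosSemidef :=
  (posSemidef_vecMulVec_self_star v).smul (inv_nonneg_of_nonneg (dotProduct_star_self_nonneg v))

theorem trace_rankOneProj {v : n → 𝕜} (hv : v ≠ 0) : (rankOneProj v).trace = 1 := by
  rw [rankOneProj, trace_smul, trace_vecMulVec, dotProduct_comm v, smul_eq_mul,
    inv_mul_cancel₀ (dotProduct_star_self_eq_zero.not.2 hv)]

theorem mul_rankOneProj_of_mulVec_eq {A : Matrix n n 𝕜} {v : n → 𝕜} {c : 𝕜}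
    (hv : A *ᵥ v = c • v) : A * rankOneProj v = c • rankOneProj v := by
  rw [rankOneProj, Matrix.mul_smul, mul_vecMulVec, hv, smul_vecMulVec, smul_comm]

theorem rankOneProj_mul_of_mulVec_eq {A : Matrix n n 𝕜} (hA : A.IsHermitian) {v : n → 𝕜}
    {μ : ℝ} (hv : A *ᵥ v = (μ : 𝕜) • v) : rankOneProj v * A = (μ : 𝕜) • rankOneProj v := by
  have : star v ᵥ* A = (μ : 𝕜) • star v := by
    rw [← hA.eq, ← star_mulVec, hv, star_smul, RCLike.star_def, RCLike.conj_ofReal]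
  rw [rankOneProj, Matrix.smul_mul, vecMulVec_mul, this, vecMulVec_smul, smul_comm]

theorem commute_rankOneProj {A : Matrix n n 𝕜} (hA : A.IsHermitian) {v : n → 𝕜} {μ : ℝ}
    (hv : A *ᵥ v = (μ : 𝕜) • v) : Commute A (rankOneProj v) :=
  (mul_rankOneProj_of_mulVec_eq hv).trans (rankOneProj_mul_of_mulVec_eq hA hv).symm

theorem mul_rankOneProj_mul_of_mulVec_eq_self {P : Matrix n n 𝕜} (hP : P.IsHermitian)
    {v : n → 𝕜} (hv : P *ᵥ v = v) : P * rankOneProj v * P = rankOneProj v := by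
  have hv' : P *ᵥ v = ((1 : ℝ) : 𝕜) • v := by rw [hv, RCLike.ofReal_one, one_smul]
  rw [mul_rankOneProj_of_mulVec_eq hv', Matrix.smul_mul, rankOneProj_mul_of_mulVec_eq hP hv',
    smul_smul, RCLike.ofReal_one, one_mul, one_smul]

end RankOneProj

section DarkState

variable {Ng Ne : ℕ}

theorem isHermitian_Pg : (Pg Ng Ne).IsHermitian := by
  simp [Pg, IsHermitian, diagonal_conjTranspose]

theorem Pg_mul_Pg : Pg Ng Ne * Pg Ng Ne = Pg Ng Ne := by
  rw [Pg, diagonal_mul_diagonal]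
  congr
  ext (i | j) <;> simp

theorem jump_mul_Pg (i : Fin Ng) (j : Fin Ne) : jump Ng Ne i j * Pg Ng Ne = 0 := by
  ext a (k | k) <;> simp [jump, Pg, single_apply]

theorem Pg_mul_conjTranspose_jump (i : Fin Ng) (j : Fin Ne) :
    Pg Ng Ne * (jump Ng Ne i j)ᴴ = 0 := by
  rw [← isHermitian_Pg.eq, ← conjTranspose_mul, jump_mul_Pg, conjTranspose_zero]

theorem lindblad_eq_of_eq_Pg_mul_mul_Pg (H : Matrix (Fin Ng ⊕ Fin Ne) (Fin Ng ⊕ Fin Ne) ℂ)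
    (γ : Fin Ng → Fin Ne → ℝ) {ρ : Matrix (Fin Ng ⊕ Fin Ne) (Fin Ng ⊕ Fin Ne) ℂ}
    (hρ : ρ = Pg Ng Ne * ρ * Pg Ng Ne) : Lindblad Ng Ne H γ ρ = -I • (H * ρ - ρ * H) := by
  have hjump (i j) : jump Ng Ne i j * ρ = 0 := by
    rw [hρ, ← Matrix.mul_assoc, ← Matrix.mul_assoc, jump_mul_Pg, Matrix.zero_mul, Matrix.zero_mul]
  have hjump' (i j) : ρ * (jump Ng Ne i j)ᴴ = 0 := by
    rw [hρ, Matrix.mul_assoc, Pg_mul_conjTranspose_jump, Matrix.mul_zero]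
  simp [Lindblad, Matrix.mul_assoc, ← Matrix.mul_assoc ρ, hjump, hjump']

theorem lindblad_eq_zero_iff_commute (H : Matrix (Fin Ng ⊕ Fin Ne) (Fin Ng ⊕ Fin Ne) ℂ)
    (γ : Fin Ng → Fin Ne → ℝ) {ρ : Matrix (Fin Ng ⊕ Fin Ne) (Fin Ng ⊕ Fin Ne) ℂ}
    (hρ : ρ = Pg Ng Ne * ρ * Pg Ng Ne) : Lindblad Ng Ne H γ ρ = 0 ↔ Commute H ρ := by
  rw [lindblad_eq_of_eq_Pg_mul_mul_Pg H γ hρ, smul_eq_zero, sub_eq_zero,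
    or_iff_right (neg_ne_zero.2 I_ne_zero), commute_iff_eq]

theorem isDarkState_iff (H : Matrix (Fin Ng ⊕ Fin Ne) (Fin Ng ⊕ Fin Ne) ℂ)
    (γ : Fin Ng → Fin Ne → ℝ) (ρ : Matrix (Fin Ng ⊕ Fin Ne) (Fin Ng ⊕ Fin Ne) ℂ) :
    IsDarkState Ng Ne H γ ρ ↔
      ρ.PosSemidef ∧ ρ.trace = 1 ∧ Commute H ρ ∧ ρ = Pg Ng Ne * ρ * Pg Ng Ne :=
  ⟨fun ⟨hpos, htr, hL, hρ⟩ => ⟨hpos, htr, (lindblad_eq_zero_iff_commute H γ hρ).1 hL, hρ⟩,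
    fun ⟨hpos, htr, hH, hρ⟩ => ⟨hpos, htr, (lindblad_eq_zero_iff_commute H γ hρ).2 hH, hρ⟩⟩

end DarkState

theorem unique_dark_state_is_pure_general
    (Ng Ne : ℕ)
    (H : Matrix (Fin Ng ⊕ Fin Ne) (Fin Ng ⊕ Fin Ne) ℂ) (hH : H.IsHermitian)
    (γ : Fin Ng → Fin Ne → ℝ)
    (ρ : Matrix (Fin Ng ⊕ Fin Ne) (Fin Ng ⊕ Fin Ne) ℂ)
    (hdark : IsDarkState Ng Ne H γ ρ)
    (huniq : ∀ ρ' : Matrix (Fin Ng ⊕ Fin Ne) (Fin Ng ⊕ Fin Ne) ℂ,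
      IsDarkState Ng Ne H γ ρ' → ρ' = ρ) :
    ρ * ρ = ρ := by
  obtain ⟨-, htr, hcomm, hρ⟩ := (isDarkState_iff H γ ρ).1 hdark
  have hρ0 : ρ ≠ 0 := by rintro rfl; simp at htr
  obtain ⟨w, μ, hv0, hv⟩ := hH.exists_mulVec_eigenvector_of_commute hcomm hρ0
  have hPv : Pg Ng Ne *ᵥ (ρ *ᵥ w) = ρ *ᵥ w := by
    rw [mulVec_mulVec, hρ, ← Matrix.mul_assoc, ← Matrix.mul_assoc, Pg_mul_Pg]
  have hdark' : IsDarkState Ng Ne H γ (rankOneProj (ρ *ᵥ w)) :=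
    (isDarkState_iff H γ _).2 ⟨posSemidef_rankOneProj _, trace_rankOneProj hv0,
      commute_rankOneProj hH hv, (mul_rankOneProj_mul_of_mulVec_eq_self isHermitian_Pg hPv).symm⟩
  rw [← huniq _ hdark']
  exact rankOneProj_mul_self _

theorem unique_dark_state_is_pure
    (Ng Ne : ℕ) (hNg : 1 ≤ Ng) (hNe : 1 ≤ Ne)
    (H : Matrix (Fin Ng ⊕ Fin Ne) (Fin Ng ⊕ Fin Ne) ℂ) (hH : H.IsHermitian)
    (γ : Fin Ng → Fin Ne → ℝ) (hγ : ∀ i j, 0 ≤ γ i j)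
    (hγpos : ∀ j, 0 < ∑ i, γ i j)
    (ρ : Matrix (Fin Ng ⊕ Fin Ne) (Fin Ng ⊕ Fin Ne) ℂ)
    (hdark : IsDarkState Ng Ne H γ ρ)
    (huniq : ∀ ρ' : Matrix (Fin Ng ⊕ Fin Ne) (Fin Ng ⊕ Fin Ne) ℂ,
      IsDarkState Ng Ne H γ ρ' → ρ' = ρ) :
    ρ * ρ = ρ :=
  unique_dark_state_is_pure_general Ng Ne H hH γ ρ hdark huniq
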